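/- Let M be a compact positively invariant and locally accessible set. Then for every invariant control set C ⊂ M there exists a compact neighborhood 𝒰 of C such that C = ⋂_{x∈𝒰} cl O⁺_pc(x), where O⁺_pc(x) denotes the set of points reachable from x with piecewise constant controls. -/

import Mathlib

open MeasureTheory Set Topology

/-- A control-affine system `ẋ = f₀(x) + ∑ vᵢ(t) fᵢ(x)` on `ℝ^d` with Lipschitz
continuous vector fields and compact control range `V ⊆ ℝ^m`.  The (unique, global)
solutions are bundled as the data `φ` together with their defining properties. -/
structure CAS (d m : ℕ) where
  /-- the drift vector field -/
  f0 : (Fin d → ℝ) → (Fin d → ℝ)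
  /-- the control vector fields -/
  f : Fin m → (Fin d → ℝ) → (Fin d → ℝ)
  /-- the control range -/
  V : Set (Fin m → ℝ)
  lip0 : ∃ K, LipschitzWith K f0
  lip : ∀ i, ∃ K, LipschitzWith K (f i)
  V_compact : IsCompact V
  /-- the solution map: `φ x v t` is the solution at time `t` starting at `x` with control `v` -/
  φ : (Fin d → ℝ) → (ℝ → (Fin m → ℝ)) → ℝ → (Fin d → ℝ)
  φ_init : ∀ x v, φ x v 0 = x
  φ_cont : ∀ x v, Continuous (φ x v)
  /-- solutions are (Carathéodory) solutions of the ODE -/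
  φ_sol : ∀ (x : Fin d → ℝ) (v : ℝ → (Fin m → ℝ)), Measurable v → (∀ t, v t ∈ V) →
    ∀ t, 0 ≤ t →
      φ x v t = x + ∫ s in (0:ℝ)..t, (f0 (φ x v s) + ∑ i, v s i • f (i) (φ x v s))

namespace CAS

variable {d m : ℕ}

/-- the set of admissible controls -/
def ctrl (S : CAS d m) : Set (ℝ → (Fin m → ℝ)) :=
  {v | Measurable v ∧ ∀ t, v t ∈ S.V}

/-- a control is piecewise constant if it has only finitely many discontinuities on
every bounded interval, i.e. it is constant between the members of a sequence of
switching times tending to infinity -/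
def PiecewiseConst (v : ℝ → (Fin m → ℝ)) : Prop :=
  ∃ τ : ℕ → ℝ, τ 0 = 0 ∧ StrictMono τ ∧ Filter.Tendsto τ Filter.atTop Filter.atTop ∧
    ∀ n, ∀ t ∈ Ico (τ n) (τ (n + 1)), v t = v (τ n)

/-- the reachable set from `x` -/
def reach (S : CAS d m) (x : Fin d → ℝ) : Set (Fin d → ℝ) :=
  {y | ∃ v ∈ S.ctrl, ∃ t ≥ (0:ℝ), S.φ x v t = y}

/-- the set reachable from `x` with piecewise constant controls -/
def reachPC (S : CAS d m) (x : Fin d → ℝ) : Set (Fin d → ℝ) :=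
  {y | ∃ v ∈ S.ctrl, PiecewiseConst v ∧ ∃ t ≥ (0:ℝ), S.φ x v t = y}

/-- the reachable set from `x` up to time `T` -/
def reachLe (S : CAS d m) (T : ℝ) (x : Fin d → ℝ) : Set (Fin d → ℝ) :=
  {y | ∃ v ∈ S.ctrl, ∃ t ∈ Icc (0:ℝ) T, S.φ x v t = y}

/-- the controllable set to `x` up to time `T` -/
def contrLe (S : CAS d m) (T : ℝ) (x : Fin d → ℝ) : Set (Fin d → ℝ) :=
  {y | ∃ v ∈ S.ctrl, ∃ t ∈ Icc (0:ℝ) T, S.φ y v t = x}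

/-- positive invariance of a set -/
def posInv (S : CAS d m) (M : Set (Fin d → ℝ)) : Prop :=
  ∀ x ∈ M, ∀ v ∈ S.ctrl, ∀ t ≥ (0:ℝ), S.φ x v t ∈ M

/-- invariance of a set -/
def inv (S : CAS d m) (M : Set (Fin d → ℝ)) : Prop :=
  ∀ t ≥ (0:ℝ), {y | ∃ x ∈ M, ∃ v ∈ S.ctrl, S.φ x v t = y} = M

/-- the two defining properties (i) controlled invariance and (ii) approximate
reachability of a control set -/
def controlSetProps (S : CAS d m) (D : Set (Fin d → ℝ)) : Prop :=
  (∀ x ∈ D, ∃ v ∈ S.ctrl, ∀ t ≥ (0:ℝ), S.φ x v t ∈ D) ∧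
  (∀ x ∈ D, D ⊆ closure (S.reach x))

/-- a control set: a maximal nonempty set with the properties `controlSetProps` -/
def isControlSet (S : CAS d m) (D : Set (Fin d → ℝ)) : Prop :=
  D.Nonempty ∧ S.controlSetProps D ∧
  ∀ D', D ⊆ D' → S.controlSetProps D' → D' = D

/-- an invariant control set -/
def isInvControlSet (S : CAS d m) (C : Set (Fin d → ℝ)) : Prop :=
  S.isControlSet C ∧ ∀ x ∈ C, closure C = closure (S.reach x)

/-- local accessibility at a point -/
def locAccAt (S : CAS d m) (x : Fin d → ℝ) : Prop :=
  ∀ T > (0:ℝ), ∀ N ∈ 𝓝 x,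
    (interior (S.reachLe T x) ∩ N).Nonempty ∧ (interior (S.contrLe T x) ∩ N).Nonempty

/-- local accessibility on a set -/
def locAccOn (S : CAS d m) (M : Set (Fin d → ℝ)) : Prop :=
  ∀ x ∈ M, S.locAccAt x

/-- the domain of attraction of a set -/
def domAttr (S : CAS d m) (C : Set (Fin d → ℝ)) : Set (Fin d → ℝ) :=
  {x | (closure (S.reach x) ∩ C).Nonempty}

/-- the strict domain of attraction of an invariant control set -/
def domAttrStrict (S : CAS d m) (C : Set (Fin d → ℝ)) : Set (Fin d → ℝ) :=
  {x | (closure (S.reach x) ∩ C).Nonempty ∧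
    ∀ C', S.isInvControlSet C' → (closure (S.reach x) ∩ C').Nonempty → C' = C}

end CAS

/-!
Grönwall's inequality makes trajectories Lipschitz in the initial point and in the control
(measured in `L¹`), and measurable controls with values in the compact set `V` are
`L¹`-limits of piecewise constant ones, so `cl 𝒪⁺_pc(x) = cl 𝒪⁺(x)`.

Local accessibility gives every point of `M` a nonempty open set of points it reaches.
From `y ∈ cl C` this open set lies in the positively invariant set `cl C`, hence meets `C`;
so `cl C` is a control set and, by maximality, `C` is closed. From `c ∈ C` the open set lies
in `C = cl 𝒪⁺(c)`, so a trajectory from `c` enters it exactly, and by continuity in the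
initial point the same control steers every point near `c` into `C`. On a compact
neighbourhood `U` of `C` inside this region `C ⊆ cl 𝒪⁺_pc(x)` for all `x ∈ U`, with
equality for `x ∈ C`.
-/

theorem le_mul_exp_of_le_add_mul_integral {u : ℝ → ℝ} {a L T : ℝ} (hu : Continuous u)
    (hL : 0 ≤ L) (h : ∀ t ∈ Icc 0 T, u t ≤ a + L * ∫ s in (0:ℝ)..t, u s) :
    ∀ t ∈ Icc 0 T, u t ≤ a * Real.exp (L * t) := by
  have hF : ∀ t, HasDerivAt (fun t => ∫ s in (0:ℝ)..t, u s) (u t) t := fun t =>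
    intervalIntegral.integral_hasDerivAt_right (hu.intervalIntegrable 0 t)
      (hu.stronglyMeasurableAtFilter _ _) hu.continuousAt
  have hF_le : ∀ t ∈ Icc 0 T, ∫ s in (0:ℝ)..t, u s ≤ gronwallBound 0 L a (t - 0) :=
    le_gronwallBound_of_liminf_deriv_right_le
      (fun t _ => (hF t).continuousAt.continuousWithinAt)
      (fun t _ _ hr => (hF t).hasDerivWithinAt.liminf_right_slope_le hr) (by simp)
      (fun t ht => by linarith [h t (Ico_subset_Icc_self ht)])
  intro t ht
  calc u t ≤ a + L * gronwallBound 0 L a t := by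
        refine (h t ht).trans ?_
        gcongr
        simpa using hF_le t ht
    _ = a * Real.exp (L * t) := by
        rcases eq_or_ne L 0 with rfl | hL0
        · simp [gronwallBound_K0]
        · simp only [gronwallBound_of_K_ne_0 hL0]
          field_simp
          ring

theorem norm_sub_le_of_eq_integral {E : Type*} [NormedAddCommGroup E] [NormedSpace ℝ E]
    {p q A B : ℝ → E} {g : ℝ → ℝ} {L T : ℝ} (hL : 0 ≤ L)
    (hp : Continuous p) (hq : Continuous q)
    (hA : IntervalIntegrable A volume 0 T) (hB : IntervalIntegrable B volume 0 T)
    (hg : IntervalIntegrable g volume 0 T) (hg0 : ∀ s ∈ Icc 0 T, 0 ≤ g s)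
    (hpA : ∀ t ∈ Icc 0 T, p t = p 0 + ∫ s in (0:ℝ)..t, A s)
    (hqB : ∀ t ∈ Icc 0 T, q t = q 0 + ∫ s in (0:ℝ)..t, B s)
    (hAB : ∀ s ∈ Icc 0 T, ‖A s - B s‖ ≤ L * ‖p s - q s‖ + g s) :
    ∀ t ∈ Icc 0 T,
      ‖p t - q t‖ ≤ (‖p 0 - q 0‖ + ∫ s in (0:ℝ)..T, g s) * Real.exp (L * t) := by
  have hu : Continuous fun t => ‖p t - q t‖ := (hp.sub hq).norm
  refine le_mul_exp_of_le_add_mul_integral hu hL fun t ht => ?_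
  have hsub : uIcc 0 t ⊆ uIcc 0 T := by
    rw [uIcc_of_le ht.1, uIcc_of_le (ht.1.trans ht.2)]
    exact Icc_subset_Icc le_rfl ht.2
  have hAB_int : IntervalIntegrable (fun s => A s - B s) volume 0 t :=
    (hA.mono_set hsub).sub (hB.mono_set hsub)
  have hg_le : ∫ s in (0:ℝ)..t, g s ≤ ∫ s in (0:ℝ)..T, g s :=
    intervalIntegral.integral_mono_interval le_rfl ht.1 ht.2
      ((ae_restrict_mem measurableSet_Ioc).mono fun s hs => hg0 s (Ioc_subset_Icc_self hs)) hg
  have hδi : IntervalIntegrable (fun s => L * ‖p s - q s‖) volume 0 t :=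
    (hu.const_mul L).intervalIntegrable 0 t
  calc ‖p t - q t‖ = ‖(p 0 - q 0) + ∫ s in (0:ℝ)..t, (A s - B s)‖ := by
        rw [hpA t ht, hqB t ht, intervalIntegral.integral_sub (hA.mono_set hsub)
          (hB.mono_set hsub)]
        congr 1
        abel
    _ ≤ ‖p 0 - q 0‖ + ∫ s in (0:ℝ)..t, ‖A s - B s‖ :=
        (norm_add_le _ _).trans <| by
          gcongr
          exact intervalIntegral.norm_integral_le_integral_norm ht.1
    _ ≤ ‖p 0 - q 0‖ + ∫ s in (0:ℝ)..t, (L * ‖p s - q s‖ + g s) := by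
        gcongr
        exact intervalIntegral.integral_mono_on ht.1 hAB_int.norm (hδi.add (hg.mono_set hsub))
          fun s hs => hAB s ⟨hs.1, hs.2.trans ht.2⟩
    _ = ‖p 0 - q 0‖ + (∫ s in (0:ℝ)..t, g s)
          + L * ∫ s in (0:ℝ)..t, ‖p s - q s‖ := by
        rw [intervalIntegral.integral_add hδi (hg.mono_set hsub),
          intervalIntegral.integral_const_mul]
        ring
    _ ≤ ‖p 0 - q 0‖ + (∫ s in (0:ℝ)..T, g s)
          + L * ∫ s in (0:ℝ)..t, ‖p s - q s‖ := by
        gcongr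

theorem intervalIntegrable_of_forall_mem_isCompact {E : Type*} [NormedAddCommGroup E]
    {f : ℝ → E} {K : Set E} (hK : IsCompact K) (hf : AEStronglyMeasurable f) {a b : ℝ}
    (hfK : ∀ s ∈ uIcc a b, f s ∈ K) : IntervalIntegrable f volume a b := by
  obtain ⟨R, hR⟩ := hK.isBounded.exists_norm_le
  rw [intervalIntegrable_iff]
  exact Measure.integrableOn_of_bounded measure_Ioc_lt_top.ne hf <|
    (ae_restrict_mem measurableSet_uIoc).mono fun s hs => hR _ (hfK s (uIoc_subset_uIcc hs))

namespace CAS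

variable {d m : ℕ} (S : CAS d m) {v : ℝ → (Fin m → ℝ)}

def vecField (u : Fin m → ℝ) (x : Fin d → ℝ) : Fin d → ℝ :=
  S.f0 x + ∑ i, u i • S.f i x

theorem phi_eq_integral (hv : v ∈ S.ctrl) (x : Fin d → ℝ) {t : ℝ}
    (ht : 0 ≤ t) : S.φ x v t = x + ∫ s in (0:ℝ)..t, S.vecField (v s) (S.φ x v s) :=
  S.φ_sol x v hv.1 hv.2 t ht

theorem phi_eq_phi_zero_add_integral (hv : v ∈ S.ctrl) (x : Fin d → ℝ) {T : ℝ} :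
    ∀ t ∈ Icc 0 T,
      S.φ x v t = S.φ x v 0 + ∫ s in (0:ℝ)..t, S.vecField (v s) (S.φ x v s) :=
  fun t ht => by rw [S.φ_init]; exact S.phi_eq_integral hv x ht.1

theorem continuous_vecField :
    Continuous fun p : (Fin m → ℝ) × (Fin d → ℝ) => S.vecField p.1 p.2 := by
  have h0 := S.lip0.choose_spec.continuous
  have hf := fun i => (S.lip i).choose_spec.continuous
  unfold vecField
  fun_prop

theorem exists_lipschitzWith_vecField : ∃ K, ∀ u ∈ S.V, LipschitzWith K (S.vecField u) := by
  obtain ⟨K₀, hK₀⟩ := S.lip0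
  choose K hK using S.lip
  obtain ⟨R, hR, hRV⟩ := S.V_compact.isBounded.exists_pos_norm_le
  refine ⟨K₀ + R.toNNReal * ∑ i, K i, fun u hu => ?_⟩
  refine hK₀.add (LipschitzWith.of_dist_le_mul fun x y => ?_)
  simp only [dist_eq_norm, ← Finset.sum_sub_distrib, ← smul_sub]
  push_cast [Real.coe_toNNReal _ hR.le]
  rw [Finset.mul_sum, Finset.sum_mul]
  refine (norm_sum_le _ _).trans (Finset.sum_le_sum fun i _ => ?_)
  rw [norm_smul, mul_assoc]
  exact mul_le_mul ((norm_le_pi_norm u i).trans (hRV u hu)) ((hK i).norm_sub_le x y)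
    (norm_nonneg _) hR.le

theorem norm_vecField_sub_vecField_le (u u' : Fin m → ℝ) (x : Fin d → ℝ) :
    ‖S.vecField u x - S.vecField u' x‖ ≤ ‖u - u'‖ * ∑ i, ‖S.f i x‖ := by
  have : S.vecField u x - S.vecField u' x = ∑ i, (u - u') i • S.f i x := by
    simp only [vecField, Pi.sub_apply, sub_smul, Finset.sum_sub_distrib]
    abel
  rw [this, Finset.mul_sum]
  refine (norm_sum_le _ _).trans (Finset.sum_le_sum fun i _ => ?_)
  rw [norm_smul]
  gcongr
  exact norm_le_pi_norm (u - u') i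

theorem intervalIntegrable_of_mem_ctrl (hv : v ∈ S.ctrl) (a b : ℝ) :
    IntervalIntegrable v volume a b :=
  intervalIntegrable_of_forall_mem_isCompact S.V_compact hv.1.aestronglyMeasurable
    fun s _ => hv.2 s

theorem intervalIntegrable_vecField (hv : v ∈ S.ctrl)
    {p : ℝ → (Fin d → ℝ)} (hp : Continuous p) (a b : ℝ) :
    IntervalIntegrable (fun s => S.vecField (v s) (p s)) volume a b :=
  intervalIntegrable_of_forall_mem_isCompact
    ((S.V_compact.prod (isCompact_uIcc.image hp)).image S.continuous_vecField)
    (S.continuous_vecField.measurable.comp (hv.1.prodMk hp.measurable)).aestronglyMeasurable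
    fun s hs => ⟨(v s, p s), ⟨hv.2 s, s, hs, rfl⟩, rfl⟩

theorem eq_phi_of_eq_integral (hv : v ∈ S.ctrl) {p : ℝ → (Fin d → ℝ)}
    (hp : Continuous p) {T : ℝ}
    (hpv : ∀ t ∈ Icc 0 T, p t = p 0 + ∫ s in (0:ℝ)..t, S.vecField (v s) (p s)) :
    ∀ t ∈ Icc 0 T, p t = S.φ (p 0) v t := by
  obtain ⟨K, hK⟩ := S.exists_lipschitzWith_vecField
  intro t ht
  have h := norm_sub_le_of_eq_integral (g := 0) K.coe_nonneg hp (S.φ_cont (p 0) v)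
    (S.intervalIntegrable_vecField hv hp 0 T)
    (S.intervalIntegrable_vecField hv (S.φ_cont (p 0) v) 0 T) intervalIntegrable_const
    (fun _ _ => le_rfl) hpv (S.phi_eq_phi_zero_add_integral hv _)
    (fun s _ => by simpa using (hK _ (hv.2 s)).norm_sub_le _ _) t ht
  rw [S.φ_init] at h
  simpa [sub_eq_zero] using h

theorem continuous_phi (hv : v ∈ S.ctrl) {t : ℝ} (ht : 0 ≤ t) :
    Continuous fun x => S.φ x v t := by
  obtain ⟨K, hK⟩ := S.exists_lipschitzWith_vecField
  refine (LipschitzWith.of_dist_le_mul (K := (Real.exp (K * t)).toNNReal)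
    fun x y => ?_).continuous
  have h := norm_sub_le_of_eq_integral (g := 0) K.coe_nonneg (S.φ_cont x v) (S.φ_cont y v)
    (S.intervalIntegrable_vecField hv (S.φ_cont x v) 0 t)
    (S.intervalIntegrable_vecField hv (S.φ_cont y v) 0 t) intervalIntegrable_const
    (fun _ _ => le_rfl) (S.phi_eq_phi_zero_add_integral hv x)
    (S.phi_eq_phi_zero_add_integral hv y)
    (fun s _ => by simpa using (hK _ (hv.2 s)).norm_sub_le _ _) t ⟨ht, le_rfl⟩
  rw [S.φ_init, S.φ_init] at h
  simpa [dist_eq_norm, Real.coe_toNNReal _ (Real.exp_pos _).le, mul_comm] using h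

theorem exists_norm_phi_sub_phi_le (hv : v ∈ S.ctrl) (x : Fin d → ℝ)
    {T : ℝ} (hT : 0 ≤ T) : ∃ C, 0 ≤ C ∧ ∀ w ∈ S.ctrl,
      ‖S.φ x v T - S.φ x w T‖ ≤ C * ∫ s in (0:ℝ)..T, ‖v s - w s‖ := by
  obtain ⟨K, hK⟩ := S.exists_lipschitzWith_vecField
  obtain ⟨B, hB⟩ := (isCompact_Icc (a := 0) (b := T)).exists_bound_of_continuousOn
    (f := fun s => ∑ i, ‖S.f i (S.φ x v s)‖)
    (continuous_finsetSum _ fun i _ =>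
      ((S.lip i).choose_spec.continuous.comp (S.φ_cont x v)).norm).continuousOn
  have hB' : ∀ s ∈ Icc 0 T, ∑ i, ‖S.f i (S.φ x v s)‖ ≤ B := fun s hs =>
    (le_abs_self _).trans (hB s hs)
  have hB0 : 0 ≤ B := (Finset.sum_nonneg fun i _ => norm_nonneg _).trans (hB' 0 ⟨le_rfl, hT⟩)
  refine ⟨B * Real.exp (K * T), by positivity, fun w hw => ?_⟩
  have h := norm_sub_le_of_eq_integral (g := fun s => ‖v s - w s‖ * B) K.coe_nonneg
    (S.φ_cont x v) (S.φ_cont x w)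
    (S.intervalIntegrable_vecField hv (S.φ_cont x v) 0 T)
    (S.intervalIntegrable_vecField hw (S.φ_cont x w) 0 T)
    (((S.intervalIntegrable_of_mem_ctrl hv 0 T).sub
      (S.intervalIntegrable_of_mem_ctrl hw 0 T)).norm.mul_const B)
    (fun _ _ => by positivity) (S.phi_eq_phi_zero_add_integral hv x)
    (S.phi_eq_phi_zero_add_integral hw x) (fun s hs => ?_) T ⟨hT, le_rfl⟩
  · rw [S.φ_init, S.φ_init, sub_self, norm_zero, zero_add,
      intervalIntegral.integral_mul_const] at h
    exact h.trans_eq (by ring)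
  · calc ‖S.vecField (v s) (S.φ x v s) - S.vecField (w s) (S.φ x w s)‖
        ≤ ‖S.vecField (w s) (S.φ x v s) - S.vecField (w s) (S.φ x w s)‖
          + ‖S.vecField (v s) (S.φ x v s) - S.vecField (w s) (S.φ x v s)‖ := by
          rw [add_comm]; exact norm_sub_le_norm_sub_add_norm_sub _ _ _
      _ ≤ K * ‖S.φ x v s - S.φ x w s‖ + ‖v s - w s‖ * B := by
          gcongr
          · exact (hK _ (hw.2 s)).norm_sub_le _ _
          · exact (S.norm_vecField_sub_vecField_le _ _ _).trans (by gcongr; exact hB' s hs)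

theorem exists_phi_add {v' : ℝ → (Fin m → ℝ)} (hv : v ∈ S.ctrl) (hv' : v' ∈ S.ctrl)
    (x : Fin d → ℝ) {t₀ : ℝ} (ht₀ : 0 ≤ t₀) :
    ∃ w ∈ S.ctrl, ∀ s ≥ 0, S.φ x w (t₀ + s) = S.φ (S.φ x v t₀) v' s := by
  classical
  -- switching with `≤` makes `w = v` on all of `[0, t₀]`
  set w : ℝ → (Fin m → ℝ) := fun s => if s ≤ t₀ then v s else v' (s - t₀) with hw_def
  have hw : w ∈ S.ctrl := by
    refine ⟨Measurable.ite measurableSet_Iic hv.1 (hv'.1.comp (measurable_sub_const t₀)),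
      fun s => ?_⟩
    simp only [hw_def]
    split_ifs
    exacts [hv.2 s, hv'.2 _]
  have hw_t₀ : S.φ x w t₀ = S.φ x v t₀ := by
    have h := S.eq_phi_of_eq_integral hv (S.φ_cont x w) (T := t₀) (fun t ht => ?_) t₀
      ⟨ht₀, le_rfl⟩
    · rwa [S.φ_init] at h
    rw [S.φ_init, S.phi_eq_integral hw x ht.1]
    congr 1
    refine intervalIntegral.integral_congr fun s hs => ?_
    rw [uIcc_of_le ht.1] at hs
    simp only [hw_def, if_pos (hs.2.trans ht.2)]
  refine ⟨w, hw, fun s hs => ?_⟩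
  have h := S.eq_phi_of_eq_integral hv' ((S.φ_cont x w).comp (continuous_const_add t₀))
    (T := s) (fun r hr => ?_) s ⟨hs, le_rfl⟩
  · simpa [hw_t₀] using h
  have hF := S.intervalIntegrable_vecField hw (S.φ_cont x w)
  have hshift : ∫ u in t₀..t₀ + r, S.vecField (w u) (S.φ x w u)
      = ∫ u in (0:ℝ)..r, S.vecField (v' u) (S.φ x w (t₀ + u)) := by
    have hcomp := intervalIntegral.integral_comp_add_left (a := 0) (b := r)
      (fun u => S.vecField (w u) (S.φ x w u)) t₀
    rw [add_zero] at hcomp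
    rw [← hcomp]
    refine intervalIntegral.integral_congr_ae (Filter.Eventually.of_forall fun u hu => ?_)
    rw [uIoc_of_le hr.1] at hu
    simp only [hw_def, if_neg (not_le.2 (lt_add_of_pos_right t₀ hu.1)), add_sub_cancel_left]
  simp only [Function.comp_apply, add_zero]
  rw [S.phi_eq_integral hw x (add_nonneg ht₀ hr.1), S.phi_eq_integral hw x ht₀, add_assoc,
    ← hshift, intervalIntegral.integral_add_adjacent_intervals (hF 0 t₀) (hF t₀ (t₀ + r))]

theorem reach_subset_reach_of_mem {x y : Fin d → ℝ} (hy : y ∈ S.reach x) :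
    S.reach y ⊆ S.reach x := by
  obtain ⟨v, hv, t₀, ht₀, rfl⟩ := hy
  rintro _ ⟨v', hv', s, hs, rfl⟩
  obtain ⟨w, hw, hφ⟩ := S.exists_phi_add hv hv' x ht₀
  exact ⟨w, hw, t₀ + s, add_nonneg ht₀ hs, hφ s hs⟩

theorem piecewiseConst_comp_floor (c : ℕ → (Fin m → ℝ)) {η : ℝ} (hη : 0 < η) :
    PiecewiseConst fun t => c ⌊t / η⌋₊ := by
  have hfloor : ∀ n : ℕ, ∀ t ∈ Ico (n * η) ((n + 1 : ℕ) * η), ⌊t / η⌋₊ = n := by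
    intro n t ht
    rw [Nat.floor_eq_iff (div_nonneg ((by positivity : (0:ℝ) ≤ n * η).trans ht.1) hη.le),
      le_div_iff₀ hη, div_lt_iff₀ hη]
    exact_mod_cast ht
  refine ⟨fun n => n * η, by simp, fun a b hab => by dsimp only; gcongr,
    tendsto_natCast_atTop_atTop.atTop_mul_const hη, fun n t ht => ?_⟩
  simp only [hfloor n t ht, hfloor n (n * η) ⟨le_rfl, by gcongr; simp⟩]

theorem exists_piecewiseConst_norm_sub_le {V : Set (Fin m → ℝ)} (hV : IsCompact V)
    (hVne : V.Nonempty) {h : ℝ → (Fin m → ℝ)} (hh : UniformContinuous h) {ε : ℝ}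
    (hε : 0 < ε) :
    ∃ w : ℝ → (Fin m → ℝ), Measurable w ∧ PiecewiseConst w ∧ (∀ t, w t ∈ V) ∧
      ∀ t ≥ 0, ∀ u ∈ V, ‖u - w t‖ ≤ 2 * ‖u - h t‖ + 2 * ε := by
  obtain ⟨η, hη, hηh⟩ := Metric.uniformContinuous_iff.1 hh ε hε
  choose c hcV hc using fun n : ℕ => hV.exists_infDist_eq_dist hVne (h (n * η))
  refine ⟨fun t => c ⌊t / η⌋₊,
    measurable_from_nat.comp (measurable_id.div_const η).nat_floor,
    piecewiseConst_comp_floor c hη, fun t => hcV _, fun t ht u hu => ?_⟩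
  set n := ⌊t / η⌋₊
  have hn : n * η ≤ t ∧ t < n * η + η := by
    have h1 := Nat.floor_le (div_nonneg ht hη.le)
    have h2 := Nat.lt_floor_add_one (t / η)
    rw [le_div_iff₀ hη] at h1
    rw [div_lt_iff₀ hη, add_mul, one_mul] at h2
    exact ⟨h1, h2⟩
  have hht : ‖h t - h (n * η)‖ < ε := by
    rw [← dist_eq_norm]
    exact hηh (by rw [Real.dist_eq, abs_of_nonneg (by linarith)]; linarith)
  have hcn : ‖h (n * η) - c n‖ ≤ ‖u - h (n * η)‖ := by
    rw [← dist_eq_norm, ← hc, norm_sub_rev, ← dist_eq_norm]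
    exact Metric.infDist_le_dist_of_mem hu
  calc ‖u - c n‖ ≤ ‖u - h (n * η)‖ + ‖h (n * η) - c n‖ :=
        norm_sub_le_norm_sub_add_norm_sub _ _ _
    _ ≤ 2 * (‖u - h t‖ + ‖h t - h (n * η)‖) := by
        linarith [norm_sub_le_norm_sub_add_norm_sub u (h t) (h (n * η))]
    _ ≤ 2 * ‖u - h t‖ + 2 * ε := by linarith

theorem exists_piecewiseConst_integral_norm_sub_lt (hv : v ∈ S.ctrl)
    {T ε : ℝ} (hT : 0 ≤ T) (hε : 0 < ε) :
    ∃ w ∈ S.ctrl, PiecewiseConst w ∧ ∫ s in (0:ℝ)..T, ‖v s - w s‖ < ε := by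
  have hvi := S.intervalIntegrable_of_mem_ctrl hv 0 T
  have hfi : Integrable ((Ioc 0 T).indicator v) :=
    ((intervalIntegrable_iff_integrableOn_Ioc_of_le hT).1 hvi).integrable_indicator
      measurableSet_Ioc
  obtain ⟨h, hh_supp, hfh, hh, hhi⟩ :=
    hfi.exists_hasCompactSupport_integral_sub_le (show 0 < ε / 4 by positivity)
  have hvh : ∫ s in (0:ℝ)..T, ‖v s - h s‖ ≤ ε / 4 := by
    rw [intervalIntegral.integral_of_le hT]
    calc ∫ s in Ioc 0 T, ‖v s - h s‖
          = ∫ s in Ioc 0 T, ‖(Ioc 0 T).indicator v s - h s‖ :=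
          setIntegral_congr_fun measurableSet_Ioc fun s hs => by rw [indicator_of_mem hs]
      _ ≤ ∫ s, ‖(Ioc 0 T).indicator v s - h s‖ :=
          setIntegral_le_integral (hfi.sub hhi).norm
            (Filter.Eventually.of_forall fun _ => norm_nonneg _)
      _ ≤ ε / 4 := hfh
  set δ := ε / (4 * (T + 1))
  obtain ⟨w, hwm, hwpc, hwV, hw⟩ := exists_piecewiseConst_norm_sub_le S.V_compact
    ⟨v 0, hv.2 0⟩ (hh_supp.uniformContinuous_of_continuous hh) (show 0 < δ by positivity)
  have hwi := S.intervalIntegrable_of_mem_ctrl ⟨hwm, hwV⟩ 0 T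
  have hvhi : IntervalIntegrable (fun s => ‖v s - h s‖) volume 0 T :=
    (hvi.sub (hh.intervalIntegrable 0 T)).norm
  have hδT : δ * T < ε / 4 := by
    rw [div_mul_eq_mul_div, div_lt_div_iff₀ (by positivity) (by norm_num)]
    nlinarith
  refine ⟨w, ⟨hwm, hwV⟩, hwpc, ?_⟩
  calc ∫ s in (0:ℝ)..T, ‖v s - w s‖
        ≤ ∫ s in (0:ℝ)..T, (2 * ‖v s - h s‖ + 2 * δ) :=
        intervalIntegral.integral_mono_on hT (hvi.sub hwi).norm
          ((hvhi.const_mul 2).add intervalIntegrable_const)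
          fun s hs => hw s hs.1 (v s) (hv.2 s)
    _ = 2 * (∫ s in (0:ℝ)..T, ‖v s - h s‖) + 2 * (δ * T) := by
        rw [intervalIntegral.integral_add (hvhi.const_mul 2) intervalIntegrable_const,
          intervalIntegral.integral_const_mul, intervalIntegral.integral_const, smul_eq_mul]
        ring
    _ < ε := by linarith

theorem reach_subset_closure_reachPC (x : Fin d → ℝ) : S.reach x ⊆ closure (S.reachPC x) := by
  rintro _ ⟨v, hv, t, ht, rfl⟩
  obtain ⟨K, hK, hvw⟩ := S.exists_norm_phi_sub_phi_le hv x ht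
  refine Metric.mem_closure_iff.2 fun ε hε => ?_
  obtain ⟨w, hw, hwpc, hvw_lt⟩ :=
    S.exists_piecewiseConst_integral_norm_sub_lt hv ht (show 0 < ε / (K + 1) by positivity)
  refine ⟨S.φ x w t, ⟨w, hw, hwpc, t, ht, rfl⟩, ?_⟩
  rw [dist_eq_norm]
  calc ‖S.φ x v t - S.φ x w t‖ ≤ K * ∫ s in (0:ℝ)..t, ‖v s - w s‖ := hvw w hw
    _ ≤ K * (ε / (K + 1)) := by gcongr
    _ < ε := by
        rw [mul_div_assoc', div_lt_iff₀ (by positivity)]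
        nlinarith

theorem reachPC_subset_reach (x : Fin d → ℝ) : S.reachPC x ⊆ S.reach x :=
  fun _ ⟨v, hv, _, t, ht, hφ⟩ => ⟨v, hv, t, ht, hφ⟩

variable {S}

theorem exists_isOpen_subset_reach {x : Fin d → ℝ} (hx : S.locAccAt x) :
    ∃ O, IsOpen O ∧ O.Nonempty ∧ O ⊆ S.reach x := by
  obtain ⟨z, hz, -⟩ := (hx 1 one_pos univ Filter.univ_mem).1
  refine ⟨_, isOpen_interior, ⟨z, hz⟩, interior_subset.trans ?_⟩
  rintro _ ⟨v, hv, t, ht, rfl⟩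
  exact ⟨v, hv, t, ht.1, rfl⟩

namespace isInvControlSet

variable {C : Set (Fin d → ℝ)}

theorem posInv_closure (hC : S.isInvControlSet C) :
    S.posInv (closure C) := fun y hy v hv t ht => by
  rw [← closure_closure (s := C)]
  refine map_mem_closure (f := fun x => S.φ x v t) (S.continuous_phi hv ht) hy fun c hc => ?_
  rw [hC.2 c hc]
  exact subset_closure ⟨v, hv, t, ht, rfl⟩

theorem reach_subset_closure (hC : S.isInvControlSet C) {y : Fin d → ℝ}
    (hy : y ∈ closure C) : S.reach y ⊆ closure C := by
  rintro _ ⟨v, hv, t, ht, rfl⟩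
  exact hC.posInv_closure y hy v hv t ht

theorem exists_mem_reach_of_mem_closure (hC : S.isInvControlSet C) {y : Fin d → ℝ}
    (hy : y ∈ closure C) (hacc : S.locAccAt y) : ∃ p ∈ C, p ∈ S.reach y := by
  obtain ⟨O, hO, ⟨z, hz⟩, hOy⟩ := exists_isOpen_subset_reach hacc
  obtain ⟨p, hpO, hpC⟩ := mem_closure_iff.1 (hC.reach_subset_closure hy (hOy hz)) O hO hz
  exact ⟨p, hpC, hOy hpO⟩

theorem isClosed (hC : S.isInvControlSet C) (hacc : ∀ y ∈ closure C, S.locAccAt y) :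
    IsClosed C := by
  obtain ⟨x₀, hx₀⟩ := hC.1.1
  obtain ⟨v₀, hv₀, -⟩ := hC.1.2.1.1 x₀ hx₀
  rw [← closure_eq_iff_isClosed]
  refine hC.1.2.2 _ subset_closure ⟨fun y hy => ?_, fun y hy => ?_⟩
  · exact ⟨v₀, hv₀, hC.posInv_closure y hy v₀ hv₀⟩
  · obtain ⟨p, hpC, hpy⟩ := hC.exists_mem_reach_of_mem_closure hy (hacc y hy)
    rw [hC.2 p hpC]
    exact closure_mono (S.reach_subset_reach_of_mem hpy)

theorem setOf_reach_inter_nonempty_mem_nhdsSet (hC : S.isInvControlSet C) (hCcl : IsClosed C)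
    (hacc : ∀ c ∈ C, S.locAccAt c) : {x | (S.reach x ∩ C).Nonempty} ∈ 𝓝ˢ C := by
  refine mem_nhdsSet_iff_forall.2 fun c hc => ?_
  obtain ⟨O, hO, ⟨z, hz⟩, hOc⟩ := exists_isOpen_subset_reach (hacc c hc)
  have hOC : O ⊆ C := hOc.trans (hCcl.closure_eq ▸ hC.reach_subset_closure (subset_closure hc))
  have hz' : z ∈ closure (S.reach c) := by rw [← hC.2 c hc, hCcl.closure_eq]; exact hOC hz
  obtain ⟨_, hφO, v, hv, t, ht, rfl⟩ := mem_closure_iff.1 hz' O hO hz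
  refine Filter.mem_of_superset
    (((S.continuous_phi hv ht).isOpen_preimage O hO).mem_nhds hφO) fun x hx => ?_
  exact ⟨S.φ x v t, ⟨v, hv, t, ht, rfl⟩, hOC hx⟩

theorem subset_closure_reachPC (hC : S.isInvControlSet C) (hCcl : IsClosed C) {x : Fin d → ℝ}
    (hx : (S.reach x ∩ C).Nonempty) : C ⊆ closure (S.reachPC x) := by
  obtain ⟨p, hpx, hpC⟩ := hx
  calc C = closure (S.reach p) := by rw [← hC.2 p hpC, hCcl.closure_eq]
    _ ⊆ closure (S.reach x) := closure_mono (S.reach_subset_reach_of_mem hpx)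
    _ ⊆ closure (S.reachPC x) :=
        closure_minimal (S.reach_subset_closure_reachPC x) isClosed_closure

end isInvControlSet

end CAS

theorem stmt15_general {d m : ℕ} (S : CAS d m) (M C : Set (Fin d → ℝ))
    (hMc : IsCompact M) (hacc : S.locAccOn M)
    (hC : S.isInvControlSet C) (hCM : C ⊆ M) :
    ∃ U : Set (Fin d → ℝ), IsCompact U ∧ U ∈ 𝓝ˢ C ∧
      C = ⋂ x ∈ U, closure (S.reachPC x) := by
  have hCcl : IsClosed C :=
    hC.isClosed fun y hy => hacc y (closure_minimal hCM hMc.isClosed hy)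
  have hW := hC.setOf_reach_inter_nonempty_mem_nhdsSet hCcl fun c hc => hacc c (hCM hc)
  obtain ⟨U, hU, hCU, hUW⟩ := exists_compact_between (hMc.of_isClosed_subset hCcl hCM)
    isOpen_interior (subset_interior_iff_mem_nhdsSet.2 hW)
  have hU_reach := hUW.trans interior_subset
  refine ⟨U, hU, subset_interior_iff_mem_nhdsSet.1 hCU, subset_antisymm ?_ ?_⟩
  · exact subset_iInter₂ fun x hx => hC.subset_closure_reachPC hCcl (hU_reach hx)
  · obtain ⟨x₀, hx₀⟩ := hC.1.1
    calc ⋂ x ∈ U, closure (S.reachPC x) ⊆ closure (S.reachPC x₀) :=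
          biInter_subset_of_mem (interior_subset (hCU hx₀))
      _ ⊆ closure (S.reach x₀) := closure_mono (S.reachPC_subset_reach x₀)
      _ = C := by rw [← hC.2 x₀ hx₀, hCcl.closure_eq]

/-- Let `M` be compact, positively invariant and locally
accessible.  Then every invariant control set `C ⊆ M` has a compact neighborhood
`𝒰` such that `C = ⋂_{x ∈ 𝒰} cl 𝒪⁺_pc(x)`. -/
theorem stmt15 {d m : ℕ} (S : CAS d m) (M C : Set (Fin d → ℝ))
    (hMc : IsCompact M) (hM : S.posInv M) (hacc : S.locAccOn M)
    (hC : S.isInvControlSet C) (hCM : C ⊆ M) :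
    ∃ U : Set (Fin d → ℝ), IsCompact U ∧ U ∈ 𝓝ˢ C ∧
      C = ⋂ x ∈ U, closure (S.reachPC x) :=
  stmt15_general S M C hMc hacc hC hCM
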